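/- arXiv:math/0610918 — 3 statements merged into one kernel-verified Lean document; each statement's English description precedes it below -/
import Mathlib

section
/- Let R be a local ring (i.e., R/J(R) is a division ring) and let Cₙ be a cyclic group of order n ≥ 1. If the characteristic of R/J(R) is not 2, then the group ring RCₙ is 2-clean: every element of RCₙ is the sum of an idempotent and two units of RCₙ. -/
section LocalFacts
variable {R : Type*} [Ring R] [IsLocalRing R]

theorem myloc_add {a b c : R} (h : a + b = c) (hc : IsUnit c) : IsUnit a ∨ IsUnit b := by
  obtain ⟨u, rfl⟩ := hc
  have h1 : (↑u⁻¹ : R) * a + (↑u⁻¹ : R) * b = 1 := by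
    rw [← mul_add, h]; exact u.inv_mul
  rcases IsLocalRing.isUnit_or_isUnit_of_add_one h1 with h2 | h2
  · left
    have : a = (u : R) * ((↑u⁻¹ : R) * a) := by rw [← mul_assoc, u.mul_inv, one_mul]
    rw [this]; exact (Units.isUnit u).mul h2
  · right
    have : b = (u : R) * ((↑u⁻¹ : R) * b) := by rw [← mul_assoc, u.mul_inv, one_mul]
    rw [this]; exact (Units.isUnit u).mul h2

theorem myloc_unit_of_left_inv {x y : R} (h : y * x = 1) : IsUnit x := by
  have hid : (x * y) * (x * y) = x * y := by
    rw [mul_assoc, ← mul_assoc y x y, h, one_mul]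
  have hsum : (x * y) + (1 - x * y) = 1 := add_sub_cancel _ _
  rcases IsLocalRing.isUnit_or_isUnit_of_add_one hsum with hu | hu
  · obtain ⟨u, hu'⟩ := hu
    have h2 : (u : R) * (x * y) = (u : R) * 1 := by
      rw [mul_one, hu', hid]
    have h1 : x * y = 1 := by
      have := congrArg (fun z => (↑u⁻¹ : R) * z) h2
      simpa [← mul_assoc, u.inv_mul] using this
    exact ⟨⟨x, y, h1, h⟩, rfl⟩
  · exfalso
    have h0 : (1 - x * y) * x = 0 := by
      have hx : x * (y * x) = x := by rw [h, mul_one]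
      calc (1 - x * y) * x = x - x * y * x := by rw [sub_mul, one_mul]
      _ = x - x * (y * x) := by rw [mul_assoc]
      _ = 0 := by rw [hx, sub_self]
    obtain ⟨u, hu'⟩ := hu
    have hx0 : x = 0 := by
      have h3 : (↑u⁻¹ : R) * ((1 - x * y) * x) = x := by rw [← hu', ← mul_assoc, u.inv_mul, one_mul]
      rw [h0, mul_zero] at h3; exact h3.symm
    have : (0 : R) = 1 := by rw [← h, hx0, mul_zero]
    exact zero_ne_one this

theorem myloc_unit_of_right_inv {x y : R} (h : x * y = 1) : IsUnit x := by
  have hy : IsUnit y := myloc_unit_of_left_inv h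
  obtain ⟨u, rfl⟩ := hy
  have hx : x = ↑u⁻¹ := by
    have := congrArg (fun z => z * (↑u⁻¹ : R)) h
    simpa [mul_assoc, u.mul_inv] using this
  rw [hx]; exact Units.isUnit _

theorem myloc_nonunit_mul_left {x : R} (a : R) (hx : ¬ IsUnit x) : ¬ IsUnit (a * x) := by
  intro h
  obtain ⟨u, hu⟩ := h
  apply hx
  have : ((↑u⁻¹ : R) * a) * x = 1 := by rw [mul_assoc, ← hu, u.inv_mul]
  exact myloc_unit_of_left_inv this

theorem myloc_nonunit_mul_right {x : R} (a : R) (hx : ¬ IsUnit x) : ¬ IsUnit (x * a) := by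
  intro h
  obtain ⟨u, hu⟩ := h
  apply hx
  have : x * (a * (↑u⁻¹ : R)) = 1 := by rw [← mul_assoc, ← hu, u.mul_inv]
  exact myloc_unit_of_right_inv this

theorem myloc_nonunit_add {x y : R} (hx : ¬ IsUnit x) (hy : ¬ IsUnit y) : ¬ IsUnit (x + y) :=
  fun h => (myloc_add rfl h).elim hx hy

theorem myloc_unit_one_sub {x : R} (hx : ¬ IsUnit x) : IsUnit (1 - x) := by
  have h : (1 - x) + x = 1 := sub_add_cancel _ _
  rcases IsLocalRing.isUnit_or_isUnit_of_add_one h with h1 | h1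
  · exact h1
  · exact absurd h1 hx

theorem myloc_unit_one_add {x : R} (hx : ¬ IsUnit x) : IsUnit (1 + x) := by
  have h := myloc_unit_one_sub (x := -x) (by simpa using hx)
  simpa [sub_neg_eq_add] using h

end LocalFacts
section TwoUnit
variable {R : Type*} [Ring R] [IsLocalRing R]

theorem myloc_one_notmem_jac : (1 : R) ∉ (⊥ : TwoSidedIdeal R).jacobson := by
  intro h1
  rw [TwoSidedIdeal.mem_jacobson_iff] at h1
  obtain ⟨z, hz⟩ := h1 (-1)
  rw [TwoSidedIdeal.mem_bot] at hz
  have : (-1 : R) = 0 := by rw [← hz]; noncomm_ring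
  exact one_ne_zero (α := R) (by linear_combination (norm := noncomm_ring) -this)

theorem my_two_unit
    (hchar : ringChar ((⊥ : TwoSidedIdeal R).jacobson.ringCon.Quotient) ≠ 2) :
    IsUnit (2 : R) := by
  by_contra h2
  set J := (⊥ : TwoSidedIdeal R).jacobson with hJ
  have h2J : (2 : R) ∈ J := by
    rw [hJ, TwoSidedIdeal.mem_jacobson_iff]
    intro y
    have hy2 : ¬ IsUnit (y * 2) := myloc_nonunit_mul_left y h2
    obtain ⟨u, hu⟩ := myloc_unit_one_add hy2
    refine ⟨(↑u⁻¹ : R), ?_⟩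
    rw [TwoSidedIdeal.mem_bot]
    have h1 : (↑u⁻¹ : R) * (1 + y * 2) = 1 := by rw [← hu]; exact u.inv_mul
    calc (↑u⁻¹:R) * y * 2 + ↑u⁻¹ - 1 = ↑u⁻¹ * (1 + y * 2) - 1 := by noncomm_ring
    _ = 0 := by rw [h1, sub_self]
  set Q := J.ringCon.Quotient
  let π : R →+* Q := J.ringCon.mk'
  have hmem : ∀ x : R, π x = 0 ↔ x ∈ J := by
    intro x
    have : π x = π 0 ↔ J.ringCon x 0 := J.ringCon.eq
    rw [map_zero] at this
    rw [this, TwoSidedIdeal.rel_iff, sub_zero]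
  have h2Q : ((2 : ℕ) : Q) = 0 := by
    have : π 2 = 0 := (hmem 2).mpr h2J
    rw [← this]
    push_cast
    rfl
  have hdvd : ringChar Q ∣ 2 := (ringChar.spec Q 2).mp h2Q
  rcases (Nat.prime_two.eq_one_or_self_of_dvd _ hdvd) with h | h
  · -- ringChar Q = 1 : then 1 = 0 in Q, so 1 ∈ J, contradiction
    have h1Q : ((1 : ℕ) : Q) = 0 := (ringChar.spec Q 1).mpr (h ▸ dvd_refl _)
    rw [Nat.cast_one] at h1Q
    have : π 1 = 0 := by rw [map_one]; exact h1Q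
    exact myloc_one_notmem_jac ((hmem 1).mp this)
  · exact hchar h
end TwoUnit
section Nak
open Finsupp
variable {R : Type*} [Ring R] [IsLocalRing R] {G : Type*} [Group G] [DecidableEq G]

theorem mycoeff_mul_nonunit {x y : MonoidAlgebra R G} (hy : ∀ g, ¬ IsUnit (y.coeff g)) (g : G) :
    ¬ IsUnit ((x * y).coeff g) := by
  rw [MonoidAlgebra.coeff_mul]
  unfold Finsupp.sum
  apply Finset.sum_induction _ (fun r : R => ¬ IsUnit r)
    (fun a b ha hb => myloc_nonunit_add ha hb) not_isUnit_zero
  intro i _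
  apply Finset.sum_induction _ (fun r : R => ¬ IsUnit r)
    (fun a b ha hb => myloc_nonunit_add ha hb) not_isUnit_zero
  intro j _
  dsimp only
  split
  · exact myloc_nonunit_mul_left _ (hy j)
  · exact not_isUnit_zero

theorem myerase_part (u : MonoidAlgebra R G) (g₀ : G) (t : Finset G) (hs : u.coeff.support ⊆ t)
    (hu : ∀ g, ¬ IsUnit (u.coeff g)) :
    ((u - MonoidAlgebra.single g₀ (u.coeff g₀)).coeff.support ⊆ t.erase g₀) ∧
      (∀ g, ¬ IsUnit ((u - MonoidAlgebra.single g₀ (u.coeff g₀)).coeff g)) := by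
  constructor
  · intro g hg
    rw [Finsupp.mem_support_iff, MonoidAlgebra.coeff_sub, Finsupp.sub_apply, MonoidAlgebra.coeff_single] at hg
    rcases eq_or_ne g g₀ with rfl | hne
    · rw [Finsupp.single_eq_same, sub_self] at hg; exact absurd rfl hg
    · rw [Finset.mem_erase]
      refine ⟨hne, hs ?_⟩
      rw [Finsupp.mem_support_iff]
      intro h0
      rw [h0, Finsupp.single_eq_of_ne' (Ne.symm hne), sub_zero] at hg
      exact hg rfl
  · intro g
    rw [MonoidAlgebra.coeff_sub, Finsupp.sub_apply, MonoidAlgebra.coeff_single]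
    rcases eq_or_ne g g₀ with rfl | hne
    · rw [Finsupp.single_eq_same, sub_self]; exact not_isUnit_zero
    · rw [Finsupp.single_eq_of_ne' (Ne.symm hne), sub_zero]; exact hu g

theorem mynak [Fintype G] (f : MonoidAlgebra R G) (hf : ∀ g, ¬ IsUnit (f.coeff g)) :
    IsUnit (1 + f) := by
  classical
  suffices H : ∀ (f' : MonoidAlgebra R G), (∀ g, ¬ IsUnit (f'.coeff g)) → ∃ z, z * (1 + f') = 1 by
    obtain ⟨z, hz⟩ := H f hf
    have hzeq : z = 1 + (-(z * f)) := by
      have h1 : z + z * f = 1 := by rw [← hz]; noncomm_ring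
      linear_combination (norm := noncomm_ring) h1
    have hz' : ∀ g, ¬ IsUnit ((-(z * f)).coeff g) := by
      intro g
      rw [MonoidAlgebra.coeff_neg, Finsupp.neg_apply, IsUnit.neg_iff]
      exact mycoeff_mul_nonunit hf g
    obtain ⟨w, hw⟩ := H _ hz'
    rw [← hzeq] at hw
    have hwz : w = 1 + f := by
      calc w = w * (z * (1 + f)) := by rw [hz, mul_one]
      _ = (w * z) * (1 + f) := (mul_assoc _ _ _).symm
      _ = 1 + f := by rw [hw, one_mul]
    exact ⟨⟨1 + f, z, by rw [← hwz]; exact hw, hz⟩, rfl⟩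
  clear hf f
  intro f hf
  set K : Submodule (MonoidAlgebra R G) (MonoidAlgebra R G) :=
    Submodule.span (MonoidAlgebra R G) {1 + f} with hK
  have hmemK : ∀ x : MonoidAlgebra R G, x * (1 + f) ∈ K :=
    fun x => Submodule.mem_span_singleton.mpr ⟨x, by rw [smul_eq_mul]⟩
  have key : ∀ (N : ℕ) (t : Finset G), t.card ≤ N →
      (∀ x : MonoidAlgebra R G, ∃ k u : MonoidAlgebra R G, k ∈ K ∧ x = k + u ∧ u.coeff.support ⊆ t ∧ ∀ g, ¬ IsUnit (u.coeff g)) →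
      (1 : MonoidAlgebra R G) ∈ K := by
    intro N
    induction N with
    | zero =>
      intro t ht hP
      obtain ⟨k, u, hk, hx, hsupp, _⟩ := hP 1
      have ht0 : t = ∅ := Finset.card_eq_zero.mp (Nat.le_zero.mp ht)
      have hu0 : u = 0 := by
        rw [← MonoidAlgebra.coeff_eq_zero, ← Finsupp.support_eq_empty]
        rw [ht0] at hsupp
        exact Finset.subset_empty.mp hsupp
      rw [hu0, add_zero] at hx
      rwa [hx]
    | succ N ih =>
      intro t ht hP
      rcases Finset.eq_empty_or_nonempty t with rfl | ⟨g₀, hg₀⟩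
      · obtain ⟨k, u, hk, hx, hsupp, _⟩ := hP 1
        have hu0 : u = 0 := by
          rw [← MonoidAlgebra.coeff_eq_zero, ← Finsupp.support_eq_empty]
          exact Finset.subset_empty.mp hsupp
        rw [hu0, add_zero] at hx
        rwa [hx]
      · obtain ⟨k₀, u₀, hk₀, hx₀, hs₀, hu₀⟩ := hP (MonoidAlgebra.single g₀ 1)
        set c₀ := u₀.coeff g₀ with hc₀
        obtain ⟨v, hv'⟩ := myloc_unit_one_sub (hu₀ g₀)
        set u₀' : MonoidAlgebra R G := u₀ - MonoidAlgebra.single g₀ c₀ with hu₀'def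
        obtain ⟨hs₀', hu₀'⟩ := myerase_part u₀ g₀ t hs₀ hu₀
        have hq : MonoidAlgebra.single g₀ (1 - c₀) = k₀ + u₀' := by
          have h := Finsupp.single_sub (a := g₀) (b₁ := (1 : R)) (b₂ := c₀)
          calc MonoidAlgebra.single g₀ (1 - c₀)
              = MonoidAlgebra.single g₀ 1 - MonoidAlgebra.single g₀ c₀ := by
                ext1; simp only [MonoidAlgebra.coeff_single, MonoidAlgebra.coeff_sub]; exact h
          _ = (k₀ + u₀) - MonoidAlgebra.single g₀ c₀ := by rw [← hx₀]
          _ = k₀ + u₀' := by rw [hu₀'def]; abel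
        set sv : MonoidAlgebra R G := MonoidAlgebra.single (1 : G) (↑v⁻¹ : R) with hsv
        have hsg : MonoidAlgebra.single g₀ (1 : R) = sv * k₀ + sv * u₀' := by
          have h1 : sv * MonoidAlgebra.single g₀ (1 - c₀) = MonoidAlgebra.single g₀ 1 := by
            rw [hsv, MonoidAlgebra.single_mul_single, one_mul, ← hv', v.inv_mul]
          rw [← h1, hq, mul_add]
        have hk₁ : sv * k₀ ∈ K := by
          have := K.smul_mem sv hk₀
          rwa [smul_eq_mul] at this
        set w₀ : MonoidAlgebra R G := sv * u₀' with hw₀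
        have hw₀c : ∀ g, ¬ IsUnit (w₀.coeff g) := by
          intro g
          rw [hw₀, hsv, MonoidAlgebra.single_one_mul_apply]
          exact myloc_nonunit_mul_left _ (hu₀' g)
        have hw₀s : w₀.coeff.support ⊆ t.erase g₀ := by
          intro g hg
          rw [Finsupp.mem_support_iff, hw₀, hsv, MonoidAlgebra.single_one_mul_apply] at hg
          apply hs₀'
          rw [Finsupp.mem_support_iff]
          intro h0
          rw [h0, mul_zero] at hg
          exact hg rfl
        apply ih (t.erase g₀)
        · have := Finset.card_erase_of_mem hg₀
          omega
        · intro x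
          obtain ⟨k, u, hk, hx, hs, hu⟩ := hP x
          obtain ⟨hsE, huE⟩ := myerase_part u g₀ t hs hu
          refine ⟨k + MonoidAlgebra.single (1 : G) (u.coeff g₀) * (sv * k₀),
              (u - MonoidAlgebra.single g₀ (u.coeff g₀)) + MonoidAlgebra.single (1 : G) (u.coeff g₀) * w₀,
              ?_, ?_, ?_, ?_⟩
          · apply K.add_mem hk
            have := K.smul_mem (MonoidAlgebra.single (1 : G) (u.coeff g₀)) hk₁
            rwa [smul_eq_mul] at this
          · have h1 : MonoidAlgebra.single g₀ (u.coeff g₀)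
                = MonoidAlgebra.single (1 : G) (u.coeff g₀) * MonoidAlgebra.single g₀ (1 : R) := by
              rw [MonoidAlgebra.single_mul_single, one_mul, mul_one]
            calc x = k + u := hx
            _ = k + (MonoidAlgebra.single g₀ (u.coeff g₀) + (u - MonoidAlgebra.single g₀ (u.coeff g₀))) := by
                abel
            _ = k + (MonoidAlgebra.single (1 : G) (u.coeff g₀) * (sv * k₀ + sv * u₀')
                  + (u - MonoidAlgebra.single g₀ (u.coeff g₀))) := by rw [← hsg, ← h1]
            _ = (k + MonoidAlgebra.single (1 : G) (u.coeff g₀) * (sv * k₀))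
                + ((u - MonoidAlgebra.single g₀ (u.coeff g₀))
                  + MonoidAlgebra.single (1 : G) (u.coeff g₀) * (sv * u₀')) := by
                rw [mul_add]; abel
          · rw [MonoidAlgebra.coeff_add]
            apply Finset.Subset.trans Finsupp.support_add
            apply Finset.union_subset hsE
            intro g hg
            apply hw₀s
            rw [Finsupp.mem_support_iff] at hg ⊢
            rw [MonoidAlgebra.single_one_mul_apply] at hg
            intro h0
            rw [h0, mul_zero] at hg
            exact hg rfl
          · intro g
            rw [MonoidAlgebra.coeff_add, Finsupp.add_apply]
            apply myloc_nonunit_add (huE g)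
            rw [MonoidAlgebra.single_one_mul_apply]
            exact myloc_nonunit_mul_left _ (hw₀c g)
  have hcover : ∀ x : MonoidAlgebra R G, ∃ k u : MonoidAlgebra R G, k ∈ K ∧ x = k + u ∧ u.coeff.support ⊆ Finset.univ
      ∧ ∀ g, ¬ IsUnit (u.coeff g) := by
    intro x
    refine ⟨x * (1 + f), -(x * f), hmemK x, by noncomm_ring, Finset.subset_univ _, ?_⟩
    intro g
    rw [MonoidAlgebra.coeff_neg, Finsupp.neg_apply, IsUnit.neg_iff]
    exact mycoeff_mul_nonunit hf g
  have h1K : (1 : MonoidAlgebra R G) ∈ K := key (Finset.univ.card) Finset.univ le_rfl hcover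
  obtain ⟨z, hz⟩ := Submodule.mem_span_singleton.mp h1K
  exact ⟨z, by rwa [smul_eq_mul] at hz⟩

end Nak
section Fitting
variable {D : Type*} [DivisionRing D] {G : Type*} [Group G] [Fintype G] [DecidableEq G]

noncomputable def myrmul (c : MonoidAlgebra D G) : MonoidAlgebra D G →ₗ[D] MonoidAlgebra D G where
  toFun x := x * c
  map_add' x y := add_mul x y c
  map_smul' d x := smul_mul_assoc d x c

@[simp] theorem myrmul_apply (c x : MonoidAlgebra D G) : myrmul c x = x * c := rfl

theorem myFitting (h2 : (2 : D) ≠ 0) (a : MonoidAlgebra D G) :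
    ∃ u v : MonoidAlgebra D G, IsUnit u ∧ IsUnit v ∧ a = u + v := by
  classical
  haveI : Module.Finite D (MonoidAlgebra D G) := Module.Finite.of_basis (MonoidAlgebra.basis G D)
  have unitcrit : ∀ b : MonoidAlgebra D G, (∀ x, x * b = 0 → x = 0) → IsUnit b := by
    intro b hb
    have hinj : Function.Injective (myrmul b) := by
      intro x y hxy
      have hxy' : (x - y) * b = 0 := by
        have : x * b = y * b := hxy
        rw [sub_mul, this, sub_self]
      exact sub_eq_zero.mp (hb _ hxy')
    obtain ⟨t, ht⟩ := LinearMap.injective_iff_surjective.mp hinj 1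
    have ht' : t * b = 1 := ht
    have hbt : b * t = 1 := by
      have h0 : (b * t - 1) * b = 0 := by
        calc (b * t - 1) * b = b * (t * b) - b := by noncomm_ring
        _ = 0 := by rw [ht', mul_one, sub_self]
      have := hb _ h0
      linear_combination (norm := noncomm_ring) this
    exact ⟨⟨b, t, hbt, ht'⟩, rfl⟩
  -- stabilization
  have kmono : Monotone (fun j => LinearMap.ker (myrmul (a ^ j))) := by
    apply monotone_nat_of_le_succ
    intro j x hx
    rw [LinearMap.mem_ker] at hx ⊢
    rw [myrmul_apply] at hx ⊢
    rw [pow_succ, ← mul_assoc, hx, zero_mul]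
  obtain ⟨n₁, hn₁⟩ := monotone_stabilizes_iff_noetherian.mpr inferInstance
    ⟨fun j => LinearMap.ker (myrmul (a ^ j)), kmono⟩
  have rmono : ∀ j k : ℕ, j ≤ k →
      LinearMap.range (myrmul (a ^ k)) ≤ LinearMap.range (myrmul (a ^ j)) := by
    intro j k hjk
    rintro x ⟨y, rfl⟩
    refine ⟨y * a ^ (k - j), ?_⟩
    rw [myrmul_apply, myrmul_apply, mul_assoc, ← pow_add]
    congr 2
    omega
  obtain ⟨n₂, hn₂⟩ := IsArtinian.monotone_stabilizes
    (⟨fun j => OrderDual.toDual (LinearMap.range (myrmul (a ^ j))),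
      fun j k hjk => rmono j k hjk⟩ : ℕ →o (Submodule D (MonoidAlgebra D G))ᵒᵈ)
  set m := n₁ + n₂ + 1 with hm
  have hkerstab : ∀ x : MonoidAlgebra D G, x * a ^ (m + m) = 0 → x * a ^ m = 0 := by
    intro x hx
    have e1 : LinearMap.ker (myrmul (a ^ m)) = LinearMap.ker (myrmul (a ^ (m + m))) :=
      (hn₁ m (by omega)).symm.trans (hn₁ (m + m) (by omega))
    have : x ∈ LinearMap.ker (myrmul (a ^ (m + m))) := by rwa [LinearMap.mem_ker, myrmul_apply]
    rw [← e1, LinearMap.mem_ker, myrmul_apply] at this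
    exact this
  have hranstab : ∀ x : MonoidAlgebra D G, ∃ y, x * a ^ m = y * a ^ (m + m) := by
    intro x
    have e1 : LinearMap.range (myrmul (a ^ m)) = LinearMap.range (myrmul (a ^ (m + m))) := by
      have := (hn₂ m (by omega)).symm.trans (hn₂ (m + m) (by omega))
      exact congrArg OrderDual.ofDual this
    have hx : x * a ^ m ∈ LinearMap.range (myrmul (a ^ m)) := ⟨x, rfl⟩
    rw [e1] at hx
    obtain ⟨y, hy⟩ := hx
    exact ⟨y, hy.symm⟩
  -- disjointness
  have hdis : ∀ x : MonoidAlgebra D G, x * a ^ m = 0 → (∃ y, x = y * a ^ m) → x = 0 := by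
    rintro x hx ⟨y, rfl⟩
    have : y * a ^ (m + m) = 0 := by rw [pow_add, ← mul_assoc]; exact hx
    exact hkerstab y this
  have hdecomp : ∀ x : MonoidAlgebra D G, ∃ k y, x = k + y * a ^ m ∧ k * a ^ m = 0 := by
    intro x
    obtain ⟨y, hy⟩ := hranstab x
    refine ⟨x - y * a ^ m, y, by abel, ?_⟩
    rw [sub_mul, mul_assoc, ← pow_add, ← hy, sub_self]
  obtain ⟨k₀, y₀, h1dec, hk₀⟩ := hdecomp 1
  set e : MonoidAlgebra D G := y₀ * a ^ m with he
  have hKe : ∀ k : MonoidAlgebra D G, k * a ^ m = 0 → k * e = 0 := by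
    intro k hk
    apply hdis
    · have hkk₀ : (k * k₀) * a ^ m = 0 := by rw [mul_assoc, hk₀, mul_zero]
      have : k * e = k - k * k₀ := by
        have : k * (k₀ + e) = k * 1 := by rw [← h1dec]
        rw [mul_add, mul_one] at this
        linear_combination (norm := noncomm_ring) this
      rw [this, sub_mul, hk, hkk₀, sub_self]
    · exact ⟨k * y₀, by rw [he, mul_assoc]⟩
  have hIe : ∀ y : MonoidAlgebra D G, (y * a ^ m) * e = y * a ^ m := by
    intro y
    have h0 : (y * a ^ m) * k₀ = 0 := by
      apply hdis
      · rw [mul_assoc, hk₀, mul_zero]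
      · refine ⟨y - (y * a ^ m) * y₀, ?_⟩
        have h5 : (y * a ^ m) * (k₀ + e) = (y * a ^ m) * 1 := by rw [← h1dec]
        rw [mul_add, mul_one, he] at h5
        linear_combination (norm := noncomm_ring) h5
    have : (y * a ^ m) * (k₀ + e) = (y * a ^ m) * 1 := by rw [← h1dec]
    rw [mul_add, mul_one, h0, zero_add] at this
    exact this
  -- the central half element
  set c : D := (2 : D)⁻¹ with hc
  set hf : MonoidAlgebra D G := MonoidAlgebra.single (1 : G) c with hhf
  have hcomm : ∀ x : MonoidAlgebra D G, x * hf = hf * x := by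
    intro x
    ext g
    rw [hhf, MonoidAlgebra.mul_single_one_apply, MonoidAlgebra.single_one_mul_apply]
    have h2c : Commute (2 : D) (x.coeff g) := by
      have := Nat.cast_commute (2 : ℕ) (x.coeff g)
      simpa using this
    exact (h2c.inv_left₀).eq.symm
  have hfs2 : hf * MonoidAlgebra.single (1 : G) (2 : D) = 1 := by
    rw [hhf, MonoidAlgebra.single_mul_single, one_mul, hc, inv_mul_cancel₀ h2, MonoidAlgebra.one_def]
  -- the two candidate units
  set b₁ : MonoidAlgebra D G := (1 - e) * (a - 1) + e * (a * hf) with hb₁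
  set b₂ : MonoidAlgebra D G := (1 - e) + e * (a * hf) with hb₂
  -- basic computations
  have hke' : ∀ k : MonoidAlgebra D G, k * a ^ m = 0 → k * (1 - e) = k ∧ k * (e * (a * hf)) = 0 := by
    intro k hk
    constructor
    · rw [mul_sub, mul_one, hKe k hk, sub_zero]
    · rw [← mul_assoc, hKe k hk, zero_mul]
  have hie' : ∀ y : MonoidAlgebra D G,
      (y * a ^ m) * (1 - e) = 0 ∧ (y * a ^ m) * (e * (a * hf)) = ((y * a ^ m) * a) * hf := by
    intro y
    constructor
    · rw [mul_sub, mul_one, hIe y, sub_self]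
    · rw [← mul_assoc, hIe y]
      noncomm_ring
  -- from w = 0 deduce i * a = 0 and then i = 0
  have hw0 : ∀ y : MonoidAlgebra D G, ((y * a ^ m) * a) * hf = 0 → y * a ^ m = 0 := by
    intro y hw
    have hia : (y * a ^ m) * a = 0 := by
      have : (((y * a ^ m) * a) * hf) * MonoidAlgebra.single (1 : G) (2 : D)
          = (y * a ^ m) * a := by
        rw [mul_assoc, hfs2, mul_one]
      rw [← this, hw, zero_mul]
    apply hdis
    · have hsp : (y * a ^ m) * a ^ m = ((y * a ^ m) * a) * a ^ (n₁ + n₂) := by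
        rw [hm, pow_succ' a (n₁ + n₂)]
        noncomm_ring
      rw [hsp, hia, zero_mul]
    · exact ⟨y, rfl⟩
  -- splitting a zero sum K + I
  have hsplitzero : ∀ k w : MonoidAlgebra D G, k * a ^ m = 0 → (∃ z, w = z * a ^ m) →
      k + w = 0 → k = 0 ∧ w = 0 := by
    rintro k w hk ⟨z, rfl⟩ hsum
    have hkw : k = -(z * a ^ m) := by linear_combination (norm := noncomm_ring) hsum
    have hz0 : z * a ^ m = 0 := by
      apply hdis _ _ ⟨z, rfl⟩
      have hk' := hk
      rw [hkw] at hk'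
      linear_combination (norm := noncomm_ring) -hk'
    constructor
    · rw [hkw, hz0, neg_zero]
    · exact hz0
  have hwI : ∀ y : MonoidAlgebra D G, ∃ z, ((y * a ^ m) * a) * hf = z * a ^ m := by
    intro y
    refine ⟨(hf * y) * a, ?_⟩
    have h1 : ((y * a ^ m) * a) * hf = hf * ((y * a ^ m) * a) := hcomm _
    have h2 : a ^ m * a = a * a ^ m := (((Commute.refl a).pow_left m).eq)
    calc ((y * a ^ m) * a) * hf = hf * ((y * a ^ m) * a) := h1
    _ = hf * (y * (a ^ m * a)) := by rw [mul_assoc y]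
    _ = hf * (y * (a * a ^ m)) := by rw [h2]
    _ = ((hf * y) * a) * a ^ m := by noncomm_ring
  -- b₂ is a unit
  have hunit₂ : IsUnit b₂ := by
    apply unitcrit
    intro x hx
    obtain ⟨k, y, rfl, hk⟩ := hdecomp x
    have hcomp : (k + y * a ^ m) * b₂ = k + ((y * a ^ m) * a) * hf := by
      have e1 : (k + y * a ^ m) * b₂
          = (k * (1 - e) + k * (e * (a * hf)))
            + ((y * a ^ m) * (1 - e) + (y * a ^ m) * (e * (a * hf))) := by
        rw [hb₂]; noncomm_ring
      rw [e1, (hke' k hk).1, (hke' k hk).2, (hie' y).1, (hie' y).2]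
      abel
    rw [hcomp] at hx
    obtain ⟨hk0, hw0'⟩ := hsplitzero k _ hk (hwI y) hx
    have hy0 : y * a ^ m = 0 := hw0 y hw0'
    rw [hk0, hy0, add_zero]
  -- b₁ is a unit
  have hunit₁ : IsUnit b₁ := by
    apply unitcrit
    intro x hx
    obtain ⟨k, y, rfl, hk⟩ := hdecomp x
    have hcomp : (k + y * a ^ m) * b₁ = (k * a - k) + ((y * a ^ m) * a) * hf := by
      have e1 : (k + y * a ^ m) * b₁
          = ((k * (1 - e)) * (a - 1) + k * (e * (a * hf)))
            + (((y * a ^ m) * (1 - e)) * (a - 1) + (y * a ^ m) * (e * (a * hf))) := by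
        rw [hb₁]; noncomm_ring
      rw [e1, (hke' k hk).1, (hke' k hk).2, (hie' y).1, (hie' y).2]
      rw [zero_mul, mul_sub, mul_one]
      abel
    rw [hcomp] at hx
    have hkK : (k * a - k) * a ^ m = 0 := by
      have h2 : a * a ^ m = a ^ m * a := (((Commute.refl a).pow_left m).eq).symm
      calc (k * a - k) * a ^ m = k * (a * a ^ m) - k * a ^ m := by noncomm_ring
      _ = (k * a ^ m) * a - k * a ^ m := by rw [h2, ← mul_assoc]
      _ = 0 := by rw [hk, zero_mul, sub_self]
    obtain ⟨hka, hw0'⟩ := hsplitzero _ _ hkK (hwI y) hx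
    have hy0 : y * a ^ m = 0 := hw0 y hw0'
    have hkak : k * a = k := by
      have := sub_eq_zero.mp hka
      exact this
    have hpow : ∀ j : ℕ, k * a ^ j = k := by
      intro j
      induction j with
      | zero => rw [pow_zero, mul_one]
      | succ j ih => rw [pow_succ, ← mul_assoc, ih, hkak]
    have hk0 : k = 0 := by rw [← hpow m]; exact hk
    rw [hk0, hy0, add_zero]
  -- sum
  have hff : hf + hf = (1 : MonoidAlgebra D G) := by
    rw [hhf]
    have h1 : MonoidAlgebra.single (1 : G) c + MonoidAlgebra.single (1 : G) c
        = MonoidAlgebra.single (1 : G) (c + c) := (MonoidAlgebra.single_add _ _ _).symm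
    have h2 : c + c = 1 := by
      rw [hc, ← two_mul, mul_inv_cancel₀ h2]
    rw [h1, h2, MonoidAlgebra.one_def]
  have hsum : b₁ + b₂ = a := by
    have e1 : b₁ + b₂ = (1 - e) * ((a - 1) + 1) + e * (a * (hf + hf)) := by
      rw [hb₁, hb₂]; noncomm_ring
    rw [e1, hff, sub_add_cancel, mul_one]
    noncomm_ring
  exact ⟨b₁, b₂, hunit₁, hunit₂, hsum.symm⟩

end Fitting
section Residue
variable (R : Type*) [Ring R] [IsLocalRing R]

def myIdeal : TwoSidedIdeal R :=
  TwoSidedIdeal.mk' {x : R | ¬ IsUnit x} not_isUnit_zero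
    (fun hx hy => myloc_nonunit_add hx hy)
    (fun hx h => hx ((IsUnit.neg_iff _).mp h))
    (fun hy => myloc_nonunit_mul_left _ hy)
    (fun hx => myloc_nonunit_mul_right _ hx)

def MyD := (myIdeal R).ringCon.Quotient

instance : Ring (MyD R) := inferInstanceAs (Ring (myIdeal R).ringCon.Quotient)

def myRho : R →+* MyD R := (myIdeal R).ringCon.mk'

theorem myRho_surj : Function.Surjective (myRho R) :=
  fun q => Quot.inductionOn q (fun x => ⟨x, rfl⟩)

theorem myRho_zero_iff (x : R) : myRho R x = 0 ↔ ¬ IsUnit x := by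
  have h : myRho R x = myRho R 0 ↔ (myIdeal R).ringCon x 0 := (myIdeal R).ringCon.eq
  rw [map_zero] at h
  show myRho R x = 0 ↔ _
  rw [h, TwoSidedIdeal.rel_iff, sub_zero, myIdeal, TwoSidedIdeal.mem_mk']
  exact Iff.rfl

instance : Nontrivial (MyD R) := by
  refine ⟨1, 0, fun h => ?_⟩
  have h1 : myRho R 1 = 0 := by rw [map_one]; exact h
  exact ((myRho_zero_iff R 1).mp h1) isUnit_one

noncomputable def myDiv : DivisionRing (MyD R) :=
  DivisionRing.ofIsUnitOrEqZero (fun q => by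
    obtain ⟨x, rfl⟩ := myRho_surj R q
    by_cases h : IsUnit x
    · exact Or.inl (h.map (myRho R))
    · exact Or.inr ((myRho_zero_iff R x).mpr h))

end Residue

section Glue
open MonoidAlgebra

theorem myGlue {R : Type*} [Ring R] [IsLocalRing R] {D : Type*} [DivisionRing D]
    {G : Type*} [Group G] [Fintype G] [DecidableEq G]
    (ρ : R →+* D) (hker : ∀ x, ρ x = 0 ↔ ¬ IsUnit x) (hsur : Function.Surjective ρ)
    (h2 : (2 : D) ≠ 0) (a : MonoidAlgebra R G) :
    ∃ u v : MonoidAlgebra R G, IsUnit u ∧ IsUnit v ∧ a = u + v := by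
  classical
  set π : MonoidAlgebra R G →+* MonoidAlgebra D G :=
    MonoidAlgebra.liftNCRingHom (MonoidAlgebra.singleOneRingHom.comp ρ) (MonoidAlgebra.of D G)
      (fun x y => by
        show Commute (MonoidAlgebra.single 1 (ρ x)) (MonoidAlgebra.single y 1)
        unfold Commute SemiconjBy
        rw [MonoidAlgebra.single_mul_single, MonoidAlgebra.single_mul_single]
        rw [one_mul, mul_one, one_mul, mul_one]) with hπ
  have hπsingle : ∀ (g : G) (r : R),
      π (MonoidAlgebra.single g r) = MonoidAlgebra.single g (ρ r) := by
    intro g r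
    rw [hπ]
    show MonoidAlgebra.liftNC _ _ (MonoidAlgebra.single g r) = _
    rw [MonoidAlgebra.liftNC_single]
    show MonoidAlgebra.single 1 (ρ r) * MonoidAlgebra.single g 1 = _
    rw [MonoidAlgebra.single_mul_single, one_mul, mul_one]
  have hπcoeff : ∀ (s : MonoidAlgebra R G) (g : G), (π s).coeff g = ρ (s.coeff g) := by
    intro s
    induction s using MonoidAlgebra.induction_linear with
    | zero => intro g; rw [map_zero]; simp
    | add f₁ f₂ h1 h2 =>
      intro g
      rw [map_add, MonoidAlgebra.coeff_add, MonoidAlgebra.coeff_add, Finsupp.add_apply, Finsupp.add_apply, map_add, h1, h2]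
    | single g' r =>
      intro g
      rw [hπsingle, MonoidAlgebra.coeff_single, MonoidAlgebra.coeff_single]
      rcases eq_or_ne g' g with rfl | hne
      · rw [Finsupp.single_eq_same, Finsupp.single_eq_same]
      · rw [Finsupp.single_eq_of_ne' hne, Finsupp.single_eq_of_ne' hne, map_zero]
  have hπsurj : ∀ b : MonoidAlgebra D G, ∃ s, π s = b := by
    intro b
    induction b using MonoidAlgebra.induction_linear with
    | zero => exact ⟨0, map_zero _⟩
    | add f₁ f₂ h1 h2 =>
      obtain ⟨s₁, hs₁⟩ := h1; obtain ⟨s₂, hs₂⟩ := h2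
      exact ⟨s₁ + s₂, by rw [map_add, hs₁, hs₂]⟩
    | single g d =>
      obtain ⟨r, rfl⟩ := hsur d
      exact ⟨MonoidAlgebra.single g r, hπsingle g r⟩
  have hlift : ∀ s : MonoidAlgebra R G, IsUnit (π s) → IsUnit s := by
    intro s hu
    obtain ⟨V, hV⟩ := hu
    obtain ⟨t, ht⟩ := hπsurj (↑V⁻¹)
    have hst : IsUnit (s * t) := by
      have h1 : π (s * t - 1) = 0 := by
        rw [map_sub, map_mul, ht, map_one, ← hV, V.mul_inv, sub_self]
      have h2 : IsUnit (1 + (s * t - 1)) := by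
        apply mynak
        intro g
        apply (hker _).mp
        rw [← hπcoeff, h1, MonoidAlgebra.coeff_zero, Finsupp.zero_apply]
      have h3 : 1 + (s * t - 1) = s * t := by noncomm_ring
      rwa [h3] at h2
    have hts : IsUnit (t * s) := by
      have h1 : π (t * s - 1) = 0 := by
        rw [map_sub, map_mul, ht, map_one, ← hV, V.inv_mul, sub_self]
      have h2 : IsUnit (1 + (t * s - 1)) := by
        apply mynak
        intro g
        apply (hker _).mp
        rw [← hπcoeff, h1, MonoidAlgebra.coeff_zero, Finsupp.zero_apply]
      have h3 : 1 + (t * s - 1) = t * s := by noncomm_ring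
      rwa [h3] at h2
    obtain ⟨w, hw⟩ := hst
    obtain ⟨w', hw'⟩ := hts
    have hR : s * (t * ↑w⁻¹) = 1 := by rw [← mul_assoc, ← hw, w.mul_inv]
    have hL : (↑w'⁻¹ * t) * s = 1 := by rw [mul_assoc, ← hw', w'.inv_mul]
    have hLR : (↑w'⁻¹ * t : MonoidAlgebra R G) = t * ↑w⁻¹ := by
      have e1 : (↑w'⁻¹ * t : MonoidAlgebra R G) * (s * (t * ↑w⁻¹)) = t * ↑w⁻¹ := by
        rw [← mul_assoc, hL, one_mul]
      rw [hR, mul_one] at e1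
      exact e1
    exact ⟨⟨s, _, hR, by rw [← hLR]; exact hL⟩, rfl⟩
  obtain ⟨u', v', hu', hv', hab⟩ := myFitting h2 (π a)
  obtain ⟨u, hu⟩ := hπsurj u'
  have hUu : IsUnit u := hlift u (by rw [hu]; exact hu')
  have hπv : π (a - u) = v' := by
    rw [map_sub, hu, hab, add_sub_cancel_left]
  have hUv : IsUnit (a - u) := hlift _ (by rw [hπv]; exact hv')
  exact ⟨u, a - u, hUu, hUv, by abel⟩

end Glue

/-- let `R` be a local ring (equivalently, `R/J(R)` is a division ring) and
`Cₙ` the cyclic group of order `n ≥ 1`.  If `char (R/J(R)) ≠ 2` (where `J(R)` is the Jacobson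
radical, a two-sided ideal), then the group ring `RCₙ` is 2-clean: every element is the sum
of an idempotent and two units. -/
theorem stmt_15 {R : Type*} [Ring R] [IsLocalRing R] (n : ℕ) (hn : 1 ≤ n)
    (hchar : ringChar ((⊥ : TwoSidedIdeal R).jacobson.ringCon.Quotient) ≠ 2) :
    ∀ a : MonoidAlgebra R (Multiplicative (ZMod n)),
      ∃ (e : MonoidAlgebra R (Multiplicative (ZMod n)))
        (u₁ u₂ : (MonoidAlgebra R (Multiplicative (ZMod n)))ˣ),
        IsIdempotentElem e ∧
          a = e + (u₁ : MonoidAlgebra R (Multiplicative (ZMod n)))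
            + (u₂ : MonoidAlgebra R (Multiplicative (ZMod n))) := by
  intro a
  haveI : NeZero n := ⟨by omega⟩
  have h2R : IsUnit (2 : R) := my_two_unit hchar
  have h2D : (2 : MyD R) ≠ 0 := by
    have hu : IsUnit (2 : MyD R) := by
      have hmap : myRho R 2 = (2 : MyD R) := map_ofNat _ 2
      rw [← hmap]; exact h2R.map _
    exact hu.ne_zero
  letI : DivisionRing (MyD R) := myDiv R
  obtain ⟨u, v, hu, hv, habc⟩ := myGlue (G := Multiplicative (ZMod n))
    (myRho R) (myRho_zero_iff R) (myRho_surj R) h2D a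
  refine ⟨0, hu.unit, hv.unit, IsIdempotentElem.zero, ?_⟩
  rw [IsUnit.unit_spec, IsUnit.unit_spec, zero_add]
  exact habc
end

section
/- Let p be a prime number with p ≠ 2, let ℤ₍ₚ₎ = { m/n ∈ ℚ : p ∤ n } be the localization of ℤ at the prime p, and let C₃ be the cyclic group of order 3. Then the group ring ℤ₍ₚ₎C₃ is 2-clean: every element is the sum of an idempotent and two units. -/
/-!
Writing `g` for the generator of `C₃`, the element `a + b g + c g²` of `R[C₃]` times its
adjugate `(a² - bc) + (c² - ab) g + (b² - ac) g²` is the scalar `a³ + b³ + c³ - 3abc`, so it is a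
unit as soon as that cubic norm is a unit of `R`. Over the local ring `ℤ₍ₚ₎` this is decided in
the residue field `𝔽ₚ`, and there one finds `t ≠ 0` with `N(a - t, b, c) ≠ 0`: for `p ≥ 5`
because `t · N(a - t, b, c)` is a nonzero polynomial of degree `4 < p`, for `p = 3` because
`N(a, b, c) = (a + b + c)³` in characteristic `3`. Then
`a + b g + c g² = t + ((a - t) + b g + c g²)` is a sum of two units, and the idempotent can be
taken to be `0`.
-/

notation:max R "[C₃]" => MonoidAlgebra R (Multiplicative (ZMod 3))

namespace C3

variable {R : Type*} [CommRing R]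

noncomputable def gen : R[C₃] := MonoidAlgebra.of R _ (Multiplicative.ofAdd 1)

lemma gen_pow_three : (gen : R[C₃]) ^ 3 = 1 := by
  rw [gen, ← map_pow]
  exact map_one _

noncomputable def mk (a b c : R) : R[C₃] :=
  algebraMap R R[C₃] a + algebraMap R R[C₃] b * gen + algebraMap R R[C₃] c * gen ^ 2

lemma mk_add (a b c a' b' c' : R) : mk a b c + mk a' b' c' = mk (a + a') (b + b') (c + c') := by
  simp only [mk, map_add]; ring

lemma exists_eq_mk (x : R[C₃]) : ∃ a b c, x = mk a b c := by
  induction x using MonoidAlgebra.induction_linear with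
  | zero => exact ⟨0, 0, 0, by simp [mk]⟩
  | add x y hx hy =>
    obtain ⟨a, b, c, rfl⟩ := hx
    obtain ⟨a', b', c', rfl⟩ := hy
    exact ⟨_, _, _, mk_add ..⟩
  | single m r =>
    rw [MonoidAlgebra.single_eq_algebraMap_mul_of]
    have hm : MonoidAlgebra.of R _ m = gen ^ (Multiplicative.toAdd m).val := by
      rw [gen, ← map_pow, ← ofAdd_nsmul, nsmul_one, ZMod.natCast_zmod_val, ofAdd_toAdd]
    have : (Multiplicative.toAdd m).val < 3 := ZMod.val_lt _
    rw [hm]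
    interval_cases (Multiplicative.toAdd m).val
    · exact ⟨r, 0, 0, by simp [mk]⟩
    · exact ⟨0, r, 0, by simp [mk]⟩
    · exact ⟨0, 0, r, by simp [mk]⟩

def cubicNorm (a b c : R) : R := a ^ 3 + b ^ 3 + c ^ 3 - 3 * a * b * c

lemma mk_mul_mk_adj (a b c : R) :
    mk a b c * mk (a ^ 2 - b * c) (c ^ 2 - a * b) (b ^ 2 - a * c) =
      algebraMap R R[C₃] (cubicNorm a b c) := by
  simp only [mk, cubicNorm, map_sub, map_add, map_mul, map_pow, map_ofNat]
  set A := algebraMap R R[C₃] a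
  set B := algebraMap R R[C₃] b
  set C := algebraMap R R[C₃] c
  -- the coefficients of `g³` and `g⁴` in the product, folded back by `g³ = 1`
  linear_combination (B * (B ^ 2 - A * C) + C * (C ^ 2 - A * B) + C * (B ^ 2 - A * C) * gen) *
    (gen_pow_three : (gen : R[C₃]) ^ 3 = 1)

lemma map_cubicNorm {S : Type*} [CommRing S] (f : R →+* S) (a b c : R) :
    f (cubicNorm a b c) = cubicNorm (f a) (f b) (f c) := by
  simp only [cubicNorm, map_sub, map_add, map_mul, map_pow, map_ofNat]

lemma isUnit_mk {a b c : R} (h : IsUnit (cubicNorm a b c)) : IsUnit (mk a b c) :=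
  isUnit_of_mul_isUnit_left (y := mk (a ^ 2 - b * c) (c ^ 2 - a * b) (b ^ 2 - a * c))
    (mk_mul_mk_adj a b c ▸ h.map _)

lemma cubicNorm_eq_add_pow_three [CharP R 3] (a b c : R) : cubicNorm a b c = (a + b + c) ^ 3 := by
  have h3 : (3 : R) = 0 := by exact_mod_cast CharP.cast_eq_zero R 3
  rw [cubicNorm, add_pow_char, add_pow_char, h3]
  ring

lemma exists_ne_zero_cubicNorm_sub_ne_zero_of_charP_three [IsDomain R] [CharP R 3] (x y z : R) :
    ∃ t ≠ 0, cubicNorm (x - t) y z ≠ 0 := by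
  simp_rw [cubicNorm_eq_add_pow_three, pow_ne_zero_iff three_ne_zero]
  by_cases hs : x + y + z = 1
  · have h2 : (2 : R) ≠ 0 := by
      simpa using (CharP.cast_eq_zero_iff R 3 2).not.mpr (by norm_num)
    exact ⟨-1, neg_ne_zero.mpr one_ne_zero, fun h ↦ h2 (by linear_combination h - hs)⟩
  · exact ⟨1, one_ne_zero, fun h ↦ hs (by linear_combination h)⟩

open Polynomial in
lemma exists_ne_zero_cubicNorm_sub_ne_zero_of_lt_card [IsDomain R] (h : 4 < Cardinal.mk R)
    (x y z : R) : ∃ t ≠ 0, cubicNorm (x - t) y z ≠ 0 := by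
  set P : R[X] := X * cubicNorm (C x - X) (C y) (C z)
  have hdeg : P.natDegree = 4 := by
    simp only [P, cubicNorm]
    compute_degree!
  have hP : P ≠ 0 := by
    rintro hP
    simp [hP] at hdeg
  obtain ⟨t, ht⟩ := P.exists_eval_ne_zero_of_natDegree_lt_card hP (by rw [hdeg]; exact_mod_cast h)
  have ht : t * cubicNorm (x - t) y z ≠ 0 := by simpa [P, cubicNorm] using ht
  exact ⟨t, left_ne_zero_of_mul ht, right_ne_zero_of_mul ht⟩

lemma _root_.ZMod.exists_ne_zero_cubicNorm_sub_ne_zero {p : ℕ} [Fact p.Prime] (hp2 : p ≠ 2)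
    (x y z : ZMod p) : ∃ t ≠ 0, cubicNorm (x - t) y z ≠ 0 := by
  obtain rfl | hp3 := eq_or_ne p 3
  · exact exists_ne_zero_cubicNorm_sub_ne_zero_of_charP_three x y z
  · have hp5 : 5 ≤ p := (Fact.out : p.Prime).five_le_of_ne_two_of_ne_three hp2 hp3
    refine exists_ne_zero_cubicNorm_sub_ne_zero_of_lt_card ?_ x y z
    rw [Cardinal.mk_fintype, ZMod.card]
    exact_mod_cast hp5

theorem exists_eq_add_units {F : Type*} [CommRing F] (φ : R →+* F) (hφ : Function.Surjective φ)
    (hφ_unit : ∀ r, φ r ≠ 0 → IsUnit r) (hF : ∀ x y z : F, ∃ t ≠ 0, cubicNorm (x - t) y z ≠ 0)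
    (a : R[C₃]) : ∃ u₁ u₂ : R[C₃]ˣ, a = u₁ + u₂ := by
  obtain ⟨a₀, a₁, a₂, rfl⟩ := exists_eq_mk a
  obtain ⟨t', ht₀, ht⟩ := hF (φ a₀) (φ a₁) (φ a₂)
  obtain ⟨t, rfl⟩ := hφ t'
  have hu₁ : IsUnit (algebraMap R R[C₃] t) := (hφ_unit t ht₀).map _
  have hu₂ : IsUnit (mk (a₀ - t) a₁ a₂) :=
    isUnit_mk (hφ_unit _ (by rwa [map_cubicNorm, map_sub]))
  refine ⟨hu₁.unit, hu₂.unit, ?_⟩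
  simp only [IsUnit.unit_spec, mk, map_sub]
  ring

end C3

theorem isLocalization_atPrime_of_mem_iff {p : ℕ} [Fact p.Prime] (Zp : Subring ℚ)
    (hZp : ∀ q : ℚ, q ∈ Zp ↔ ∃ m n : ℤ, ¬ ((p : ℤ) ∣ n) ∧ q = (m : ℚ) / (n : ℚ)) :
    IsLocalization.AtPrime Zp (Ideal.span {(p : ℤ)}) where
  map_units := by
    rintro ⟨n, hn⟩
    have hn : ¬ (p : ℤ) ∣ n := by simpa [Ideal.mem_span_singleton] using hn
    have hn0 : (n : ℚ) ≠ 0 := by exact_mod_cast fun h : n = 0 ↦ hn (h ▸ dvd_zero _)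
    refine IsUnit.of_mul_eq_one ⟨(n : ℚ)⁻¹, (hZp _).mpr ⟨1, n, hn, by simp⟩⟩ (Subtype.ext ?_)
    simp [hn0]
  surj := by
    rintro ⟨q, hq⟩
    obtain ⟨m, n, hn, rfl⟩ := (hZp q).mp hq
    refine ⟨(m, ⟨n, by simpa [Ideal.mem_span_singleton]⟩), Subtype.ext ?_⟩
    have hn0 : (n : ℚ) ≠ 0 := by exact_mod_cast fun h : n = 0 ↦ hn (h ▸ dvd_zero _)
    simp [hn0]
  exists_of_eq := by
    intro a b hab
    exact ⟨1, by simpa using congrArg (fun q : Zp ↦ (q : ℚ)) hab⟩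

theorem exists_surjective_toZMod_of_mem_iff {p : ℕ} [Fact p.Prime] (Zp : Subring ℚ)
    (hZp : ∀ q : ℚ, q ∈ Zp ↔ ∃ m n : ℤ, ¬ ((p : ℤ) ∣ n) ∧ q = (m : ℚ) / (n : ℚ)) :
    ∃ φ : Zp →+* ZMod p, Function.Surjective φ ∧ ∀ q, φ q ≠ 0 → IsUnit q := by
  have := isLocalization_atPrime_of_mem_iff Zp hZp
  have := IsLocalization.AtPrime.isLocalRing Zp (Ideal.span {(p : ℤ)})
  let e : IsLocalRing.ResidueField Zp ≃+* ZMod p :=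
    (IsLocalization.AtPrime.equivQuotMaximalIdeal _ Zp).symm.trans (Int.quotientSpanNatEquivZMod p)
  refine ⟨e.toRingHom.comp (IsLocalRing.residue Zp),
    e.surjective.comp IsLocalRing.residue_surjective, fun q hq ↦ ?_⟩
  exact (IsLocalRing.residue_ne_zero_iff_isUnit q).mp fun h ↦ hq (by simp [h])

/-- let `p ≠ 2` be a prime, `ℤ₍ₚ₎` the subring of `ℚ` of fractions `m/n` with
`p ∤ n`, and `C₃` the cyclic group of order 3.  Then the group ring `ℤ₍ₚ₎C₃` is 2-clean:
every element is the sum of an idempotent and two units. -/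
theorem stmt_16 (p : ℕ) (hp : p.Prime) (hp2 : p ≠ 2) (Zp : Subring ℚ)
    (hZp : ∀ q : ℚ, q ∈ Zp ↔ ∃ m n : ℤ, ¬ ((p : ℤ) ∣ n) ∧ q = (m : ℚ) / (n : ℚ)) :
    ∀ a : MonoidAlgebra Zp (Multiplicative (ZMod 3)),
      ∃ (e : MonoidAlgebra Zp (Multiplicative (ZMod 3)))
        (u₁ u₂ : (MonoidAlgebra Zp (Multiplicative (ZMod 3)))ˣ),
        IsIdempotentElem e ∧
          a = e + (u₁ : MonoidAlgebra Zp (Multiplicative (ZMod 3)))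
            + (u₂ : MonoidAlgebra Zp (Multiplicative (ZMod 3))) := by
  have := Fact.mk hp
  obtain ⟨φ, hφ, hφ_unit⟩ := exists_surjective_toZMod_of_mem_iff Zp hZp
  intro a
  obtain ⟨u₁, u₂, ha⟩ := C3.exists_eq_add_units φ hφ hφ_unit
    (fun _ _ _ ↦ ZMod.exists_ne_zero_cubicNorm_sub_ne_zero hp2 ..) a
  exact ⟨0, u₁, u₂, .zero, by rw [ha, zero_add]⟩
end

section
/- Let ℤ₍₂₎ = { m/n ∈ ℚ : 2 ∤ n } be the localization of ℤ at the prime 2, and let C₇ be the cyclic group of order 7. Then the group ring ℤ₍₂₎C₇ is not clean: there exists an element of ℤ₍₂₎C₇ that cannot be written as the sum of an idempotent and a unit. -/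
set_option maxHeartbeats 1600000

open Polynomial MonoidAlgebra

noncomputable section Stmt19Aux

/-- the group `C₇` written multiplicatively -/
abbrev G7 := Multiplicative (ZMod 7)

lemma pow_mod7 {M : Type*} [Monoid M] (u : M) (hu : u ^ 7 = 1) (m : ℕ) :
    u ^ (m % 7) = u ^ m := by
  conv_rhs => rw [← Nat.div_add_mod m 7, pow_add, pow_mul, hu, one_pow, one_mul]

/-- the monoid hom `G7 →* M` sending the generator to `u`, for `u` of order dividing 7. -/
def powHom7 {M : Type*} [Monoid M] (u : M) (hu : u ^ 7 = 1) : G7 →* M where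
  toFun x := u ^ (Multiplicative.toAdd x).val
  map_one' := by
    show u ^ (0 : ZMod 7).val = 1
    simp
  map_mul' x y := by
    show u ^ (Multiplicative.toAdd x + Multiplicative.toAdd y).val = _
    rw [ZMod.val_add, pow_mod7 u hu, pow_add]

@[simp] lemma powHom7_apply {M : Type*} [Monoid M] (u : M) (hu : u ^ 7 = 1) (x : G7) :
    powHom7 u hu x = u ^ (Multiplicative.toAdd x).val := rfl

lemma liftNCRingHom_single {k R G : Type*} [Semiring k] [Semiring R] [Monoid G]
    (f : k →+* R) (g : G →* R) (h : ∀ x y, Commute (f x) (g y)) (a : G) (b : k) :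
    liftNCRingHom f g h (MonoidAlgebra.single a b) = f b * g a :=
  liftNC_single _ _ _ _

lemma sum_G7 {M : Type*} [AddCommMonoid M] (h : ℕ → M) :
    ∑ g : G7, h (Multiplicative.toAdd g).val = ∑ i ∈ Finset.range 7, h i := by
  rw [Fintype.sum_equiv (Multiplicative.toAdd : G7 ≃ ZMod 7) _
    (fun k : ZMod 7 => h k.val) (fun _ => rfl)]
  exact Fin.sum_univ_eq_sum_range (fun i => h i) 7

lemma monoidAlgebra_expand {k : Type*} [Semiring k] (b : MonoidAlgebra k G7) :
    b = ∑ x : G7, MonoidAlgebra.single x (b.coeff x) := by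
  conv_lhs => rw [← MonoidAlgebra.sum_coeff_single b]
  rw [Finsupp.sum_fintype]
  intro i
  simp

lemma liftNCRingHom_apply {k R : Type*} [Semiring k] [Semiring R]
    (f : k →+* R) (g : G7 →* R) (h : ∀ x y, Commute (f x) (g y))
    (b : MonoidAlgebra k G7) :
    liftNCRingHom f g h b = ∑ x : G7, f (b.coeff x) * g x := by
  conv_lhs => rw [monoidAlgebra_expand b]
  rw [map_sum]
  exact Finset.sum_congr rfl fun x _ => _root_.liftNCRingHom_single f g h x (b.coeff x)

lemma rat_num_eq (x : ℚ) : (x.num : ℚ) = x * (x.den : ℚ) := by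
  have hd : ((x.den : ℚ)) ≠ 0 := by exact_mod_cast x.den_nz
  exact (div_eq_iff hd).mp (Rat.num_div_den x)

lemma rat_num_mul (x y : ℚ) :
    (x * y).num * ((x.den : ℤ) * (y.den : ℤ)) = x.num * y.num * ((x * y).den : ℤ) := by
  have : ((x*y).num : ℚ) * ((x.den : ℚ) * (y.den : ℚ))
      = (x.num : ℚ) * (y.num : ℚ) * (((x*y).den : ℚ)) := by
    rw [rat_num_eq, rat_num_eq, rat_num_eq]; ring
  exact_mod_cast this

lemma rat_num_add (x y : ℚ) :
    (x + y).num * ((x.den : ℤ) * (y.den : ℤ))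
      = (x.num * (y.den : ℤ) + y.num * (x.den : ℤ)) * ((x + y).den : ℤ) := by
  have : ((x+y).num : ℚ) * ((x.den : ℚ) * (y.den : ℚ))
      = ((x.num : ℚ) * (y.den : ℚ) + (y.num : ℚ) * (x.den : ℚ)) * (((x+y).den : ℚ)) := by
    rw [rat_num_eq, rat_num_eq, rat_num_eq]; ring
  exact_mod_cast this

lemma odd_natCast_zmod2 (n : ℕ) (h : ¬ ((2:ℤ) ∣ (n : ℤ))) : ((n : ZMod 2)) = 1 := by
  have h2 : ¬ (2 ∣ n) := by exact_mod_cast h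
  have hmod : n % 2 = 1 := by omega
  calc ((n : ZMod 2)) = ((n % 2 : ℕ) : ZMod 2) := by rw [ZMod.natCast_mod]
    _ = 1 := by rw [hmod]; norm_num

/-- the cubic `X³+X+1` over `𝔽₂` -/
def fcub : (ZMod 2)[X] := X^3 + X + 1

/-- `K = 𝔽₂[X]/(X³+X+1)`; we never need that it is a field, only that it is
a nontrivial commutative ring. -/
abbrev KK := AdjoinRoot fcub

lemma fcub_degree : fcub.degree = 3 := by
  unfold fcub
  compute_degree!

instance : Nontrivial KK := AdjoinRoot.nontrivial fcub (by rw [fcub_degree]; norm_num)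

def tK : KK := AdjoinRoot.root fcub

lemma tK_rel : tK^3 + tK + 1 = 0 := by
  have h := AdjoinRoot.mk_self (f := fcub)
  have h2 : (Polynomial.aeval tK) fcub = 0 := by
    show (Polynomial.aeval (AdjoinRoot.root fcub)) fcub = 0
    rw [AdjoinRoot.aeval_eq, h]
  simpa [fcub] using h2

lemma two_eq_zero_K : (2 : KK) = 0 := by
  have h := map_ofNat (algebraMap (ZMod 2) KK) 2
  rw [show ((OfNat.ofNat 2 : ZMod 2)) = 0 from by decide] at h
  simpa using h.symm

lemma tK_pow7 : tK^7 = 1 := by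
  linear_combination (1 - tK - tK^2 + tK^4) * tK_rel + (-1 + tK^2) * two_eq_zero_K

lemma tK3_pow7 : (tK^3)^7 = 1 := by
  rw [← pow_mul, show 3*7 = 7*3 by norm_num, pow_mul, tK_pow7, one_pow]

lemma geomT : ∑ i ∈ Finset.range 7, tK ^ i = 0 := by
  simp only [Finset.sum_range_succ, Finset.sum_range_zero]
  linear_combination (-1 + tK^2 + tK^3) * tK_rel + (1 + tK) * two_eq_zero_K

lemma geomT3 : ∑ i ∈ Finset.range 7, (tK^3) ^ i = 0 := by
  simp only [Finset.sum_range_succ, Finset.sum_range_zero]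
  linear_combination (7 + 7*tK - tK^2 - 5*tK^3 - 2*tK^4 + 3*tK^5 + 3*tK^6 - tK^7
    - 2*tK^8 + tK^10 + tK^11 - tK^13 + tK^15) * tK_rel
    + (-3 - 7*tK - 3*tK^2) * two_eq_zero_K

/-- the cyclotomic field of 7th roots of unity -/
abbrev LL := CyclotomicField 7 ℚ

def zet : LL :=
  @IsCyclotomicExtension.zeta 7 _ ℚ LL _ _ _ (CyclotomicField.isCyclotomicExtension 7 ℚ)

lemma zet_spec : IsPrimitiveRoot zet 7 :=
  @IsCyclotomicExtension.zeta_spec 7 _ ℚ LL _ _ _ (CyclotomicField.isCyclotomicExtension 7 ℚ)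

lemma zet_pow7 : zet ^ 7 = 1 := zet_spec.pow_eq_one

lemma geomZ : ∑ i ∈ Finset.range 7, zet ^ i = 0 :=
  zet_spec.geom_sum_eq_zero (by norm_num)

section withZ2
variable (Z2 : Subring ℚ)
  (hZ2 : ∀ q : ℚ, q ∈ Z2 ↔ ∃ m n : ℤ, ¬ (2 ∣ n) ∧ q = (m : ℚ) / (n : ℚ))
include hZ2

lemma den_odd (q : Z2) : ¬ ((2:ℤ) ∣ ((q : ℚ).den : ℤ)) := by
  obtain ⟨m, n, hn, hq⟩ := (hZ2 (q : ℚ)).mp q.2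
  have h0 : (q : ℚ) = Rat.divInt m n := by rw [hq, Rat.divInt_eq_div]
  have hd : (((Rat.divInt m n).den : ℤ)) ∣ n := Rat.den_dvd m n
  rw [h0]
  intro h2
  exact hn (h2.trans hd)

/-- reduction mod 2 map `ℤ₍₂₎ → ℤ/2`. -/
def f2 : Z2 →+* ZMod 2 where
  toFun q := ((q : ℚ).num : ZMod 2)
  map_one' := by norm_num
  map_zero' := by norm_num
  map_mul' a b := by
    have hab : (((a*b : Z2) : ℚ)) = (a : ℚ) * (b : ℚ) := by push_cast; ring
    have hden : ¬ ((2:ℤ) ∣ ((((a:ℚ) * (b:ℚ)).den : ℤ))) := by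
      have := den_odd Z2 hZ2 (a*b); rwa [hab] at this
    have key := congrArg (Int.cast : ℤ → ZMod 2) (rat_num_mul (a : ℚ) (b : ℚ))
    push_cast at key
    rw [odd_natCast_zmod2 _ (den_odd Z2 hZ2 a), odd_natCast_zmod2 _ (den_odd Z2 hZ2 b),
      odd_natCast_zmod2 _ hden] at key
    show ((((a*b : Z2) : ℚ)).num : ZMod 2) = _
    rw [hab]
    simpa using key
  map_add' a b := by
    have hab : (((a+b : Z2) : ℚ)) = (a : ℚ) + (b : ℚ) := by push_cast; ring
    have hden : ¬ ((2:ℤ) ∣ ((((a:ℚ) + (b:ℚ)).den : ℤ))) := by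
      have := den_odd Z2 hZ2 (a+b); rwa [hab] at this
    have key := congrArg (Int.cast : ℤ → ZMod 2) (rat_num_add (a : ℚ) (b : ℚ))
    push_cast at key
    rw [odd_natCast_zmod2 _ (den_odd Z2 hZ2 a), odd_natCast_zmod2 _ (den_odd Z2 hZ2 b),
      odd_natCast_zmod2 _ hden] at key
    show ((((a+b : Z2) : ℚ)).num : ZMod 2) = _
    rw [hab]
    simpa using key

/-- coefficient map `ℤ₍₂₎ → K` -/
def fK : Z2 →+* KK := (algebraMap (ZMod 2) KK).comp (f2 Z2 hZ2)

/-- first character `ℤ₍₂₎C₇ → K`, generator `↦ t` -/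
def psi1 : MonoidAlgebra Z2 G7 →+* KK :=
  liftNCRingHom (fK Z2 hZ2) (powHom7 tK tK_pow7) fun _ _ => Commute.all _ _

/-- second character `ℤ₍₂₎C₇ → K`, generator `↦ t³` -/
def psi2 : MonoidAlgebra Z2 G7 →+* KK :=
  liftNCRingHom (fK Z2 hZ2) (powHom7 (tK^3) tK3_pow7) fun _ _ => Commute.all _ _

/-- character in characteristic zero, generator `↦ ζ₇` -/
def sig : MonoidAlgebra Z2 G7 →+* LL :=
  liftNCRingHom ((algebraMap ℚ LL).comp (Subring.subtype Z2))
    (powHom7 zet zet_pow7) fun _ _ => Commute.all _ _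

/-- augmentation map `ℤ₍₂₎C₇ → ℚ` -/
def pih : MonoidAlgebra Z2 G7 →+* ℚ :=
  liftNCRingHom (Subring.subtype Z2) 1 fun _ _ => Commute.all _ _

/-- `1/7` as element of `ℤ₍₂₎` -/
def c7 : Z2 :=
  ⟨(1:ℚ)/7, by
    rw [hZ2]
    exact ⟨1, 7, by norm_num, by norm_num⟩⟩

/-- the nontrivial idempotent `(1/7)∑ g` -/
def eps : MonoidAlgebra Z2 G7 := ∑ x : G7, MonoidAlgebra.single x (c7 Z2 hZ2)

lemma psi1_eps : psi1 Z2 hZ2 (eps Z2 hZ2) = 0 := by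
  unfold psi1 eps
  rw [map_sum]
  simp only [_root_.liftNCRingHom_single, powHom7_apply]
  rw [← Finset.mul_sum, sum_G7 (fun i => tK ^ i), geomT, mul_zero]

lemma psi2_eps : psi2 Z2 hZ2 (eps Z2 hZ2) = 0 := by
  unfold psi2 eps
  rw [map_sum]
  simp only [_root_.liftNCRingHom_single, powHom7_apply]
  rw [← Finset.mul_sum, sum_G7 (fun i => (tK^3) ^ i), geomT3, mul_zero]

lemma sig_eps : sig Z2 (eps Z2 hZ2) = 0 := by
  unfold sig eps
  rw [map_sum]
  simp only [_root_.liftNCRingHom_single, powHom7_apply]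
  rw [← Finset.mul_sum, sum_G7 (fun i => zet ^ i), geomZ, mul_zero]

lemma card_G7 : Fintype.card G7 = 7 := by
  simp

lemma pih_eps : pih Z2 (eps Z2 hZ2) = 1 := by
  unfold pih eps
  rw [map_sum]
  simp only [_root_.liftNCRingHom_single, MonoidHom.one_apply, mul_one]
  rw [Finset.sum_const, Finset.card_univ, card_G7 Z2 hZ2]
  show (7 : ℕ) • ((c7 Z2 hZ2 : ℚ)) = 1
  rw [show ((c7 Z2 hZ2 : ℚ)) = (1:ℚ)/7 from rfl]
  norm_num

/-- our non-clean element: `g + g² + g⁴` -/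
def aEl : MonoidAlgebra Z2 G7 :=
  MonoidAlgebra.single (Multiplicative.ofAdd (1 : ZMod 7)) 1
    + MonoidAlgebra.single (Multiplicative.ofAdd (2 : ZMod 7)) 1
    + MonoidAlgebra.single (Multiplicative.ofAdd (4 : ZMod 7)) 1

lemma psi1_aEl : psi1 Z2 hZ2 (aEl Z2) = 0 := by
  unfold psi1 aEl
  rw [map_add, map_add]
  simp only [_root_.liftNCRingHom_single, powHom7_apply, map_one, one_mul]
  rw [show (Multiplicative.toAdd (Multiplicative.ofAdd (1 : ZMod 7))).val = 1 from rfl,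
    show (Multiplicative.toAdd (Multiplicative.ofAdd (2 : ZMod 7))).val = 2 from rfl,
    show (Multiplicative.toAdd (Multiplicative.ofAdd (4 : ZMod 7))).val = 4 from rfl]
  linear_combination tK * tK_rel

lemma psi2_aEl : psi2 Z2 hZ2 (aEl Z2) = 1 := by
  unfold psi2 aEl
  rw [map_add, map_add]
  simp only [_root_.liftNCRingHom_single, powHom7_apply, map_one, one_mul]
  rw [show (Multiplicative.toAdd (Multiplicative.ofAdd (1 : ZMod 7))).val = 1 from rfl,
    show (Multiplicative.toAdd (Multiplicative.ofAdd (2 : ZMod 7))).val = 2 from rfl,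
    show (Multiplicative.toAdd (Multiplicative.ofAdd (4 : ZMod 7))).val = 4 from rfl]
  linear_combination (3 - 3*tK - 3*tK^2 + tK^3 + 2*tK^4 + tK^5 - tK^6 - tK^7 + tK^9) * tK_rel
    + (-2 + 3*tK^2) * two_eq_zero_K

/-- joint injectivity of the augmentation and the `ζ₇`-character -/
lemma joint_inj (b : MonoidAlgebra Z2 G7)
    (h1 : pih Z2 b = 0) (h2 : sig Z2 b = 0) : b = 0 := by
  classical
  set P : ℚ[X] := ∑ x : G7, C ((b.coeff x : ℚ)) * X ^ (Multiplicative.toAdd x).val with hP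
  have hPdeg : P.natDegree ≤ 6 := by
    apply Polynomial.natDegree_sum_le_of_forall_le
    intro x _
    refine le_trans (natDegree_C_mul_X_pow_le _ _) ?_
    have := ZMod.val_lt (Multiplicative.toAdd x)
    omega
  have hpih : pih Z2 b = ∑ x : G7, ((b.coeff x : ℚ)) := by
    unfold pih
    rw [liftNCRingHom_apply]
    simp
  have hsig : sig Z2 b
      = ∑ x : G7, algebraMap ℚ LL ((b.coeff x : ℚ)) * zet ^ (Multiplicative.toAdd x).val := by
    unfold sig
    rw [liftNCRingHom_apply]
    rfl
  have hroot1 : P.eval 1 = 0 := by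
    rw [hP, Polynomial.eval_finset_sum]
    simp only [eval_mul, eval_pow, eval_C, eval_X, one_pow, mul_one]
    rw [← hpih, h1]
  have hrootz : Polynomial.aeval zet P = 0 := by
    rw [hP, map_sum]
    simp only [map_mul, map_pow, aeval_C, aeval_X]
    rw [← hsig, h2]
  have hP0 : P = 0 := by
    by_contra hne
    haveI : Fact (Nat.Prime 7) := ⟨by norm_num⟩
    have hdvd1 : cyclotomic 7 ℚ ∣ P := by
      rw [cyclotomic_eq_minpoly_rat zet_spec (by norm_num)]
      exact minpoly.dvd ℚ zet hrootz
    have hdvd2 : X - C 1 ∣ P := dvd_iff_isRoot.mpr hroot1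
    have hcop : IsCoprime (X - C 1) (cyclotomic 7 ℚ) := by
      refine (Polynomial.irreducible_X_sub_C (1:ℚ)).coprime_iff_not_dvd.mpr ?_
      rw [dvd_iff_isRoot, Polynomial.IsRoot]
      intro hr
      have h7 := Polynomial.eval_one_cyclotomic_prime (R := ℚ) (p := 7)
      rw [hr] at h7
      norm_num at h7
    have hm : (X - C 1) * cyclotomic 7 ℚ ∣ P := hcop.mul_dvd hdvd2 hdvd1
    have hle := Polynomial.natDegree_le_of_dvd hm hne
    rw [natDegree_mul (X_sub_C_ne_zero 1) (cyclotomic_ne_zero 7 ℚ),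
      natDegree_X_sub_C, natDegree_cyclotomic, Nat.totient_prime (by norm_num)] at hle
    omega
  have hcoeff : ∀ x : G7, ((b.coeff x : ℚ)) = 0 := by
    intro x
    have hc : P.coeff ((Multiplicative.toAdd x).val) = ((b.coeff x : ℚ)) := by
      rw [hP, Polynomial.finset_sum_coeff]
      rw [Finset.sum_eq_single x]
      · rw [coeff_C_mul_X_pow]; simp
      · intro y _ hyx
        rw [coeff_C_mul_X_pow]
        have hne : (Multiplicative.toAdd x).val ≠ (Multiplicative.toAdd y).val := by
          intro hv
          exact hyx (by
            have : (Multiplicative.toAdd y) = (Multiplicative.toAdd x) := by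
              exact ZMod.val_injective 7 hv.symm
            simpa using congrArg Multiplicative.ofAdd this)
        simp [hne]
      · intro hx; exact absurd (Finset.mem_univ x) hx
    rw [hP0] at hc
    simpa using hc.symm
  ext x
  have := hcoeff x
  exact_mod_cast this

/-- classification of idempotents of `ℤ₍₂₎C₇` -/
lemma idem_cases (e : MonoidAlgebra Z2 G7) (he : IsIdempotentElem e) :
    e = 0 ∨ e = 1 ∨ e = eps Z2 hZ2 ∨ e = 1 - eps Z2 hZ2 := by
  have hpi : pih Z2 e = 0 ∨ pih Z2 e = 1 := by
    have h := congrArg (pih Z2) he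
    rw [map_mul] at h
    rcases mul_eq_zero.mp (show pih Z2 e * (pih Z2 e - 1) = 0 by
      linear_combination h) with h' | h'
    · exact Or.inl h'
    · exact Or.inr (by linear_combination h')
  have hsi : sig Z2 e = 0 ∨ sig Z2 e = 1 := by
    have h := congrArg (sig Z2) he
    rw [map_mul] at h
    rcases mul_eq_zero.mp (show sig Z2 e * (sig Z2 e - 1) = 0 by
      linear_combination h) with h' | h'
    · exact Or.inl h'
    · exact Or.inr (by linear_combination h')
  rcases hpi with hp | hp <;> rcases hsi with hs | hs
  · left
    exact joint_inj Z2 hZ2 e hp hs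
  · right; right; right
    have h0 : e - (1 - eps Z2 hZ2) = 0 := by
      apply joint_inj Z2 hZ2
      · rw [map_sub, map_sub, map_one, pih_eps Z2 hZ2, hp]; ring
      · rw [map_sub, map_sub, map_one, sig_eps Z2 hZ2, hs]; ring
    exact sub_eq_zero.mp h0
  · right; right; left
    have h0 : e - eps Z2 hZ2 = 0 := by
      apply joint_inj Z2 hZ2
      · rw [map_sub, pih_eps Z2 hZ2, hp]; ring
      · rw [map_sub, sig_eps Z2 hZ2, hs]; ring
    exact sub_eq_zero.mp h0
  · right; left
    have h0 : e - 1 = 0 := by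
      apply joint_inj Z2 hZ2
      · rw [map_sub, map_one, hp]; ring
      · rw [map_sub, map_one, hs]; ring
    exact sub_eq_zero.mp h0

end withZ2
end Stmt19Aux

/-- let `ℤ₍₂₎` be the subring of `ℚ` of fractions `m/n` with `n` odd, and let
`C₇` be the cyclic group of order 7.  Then the group ring `ℤ₍₂₎C₇` is not clean: some element
is not the sum of an idempotent and a unit. -/
theorem stmt_19 (Z2 : Subring ℚ)
    (hZ2 : ∀ q : ℚ, q ∈ Z2 ↔ ∃ m n : ℤ, ¬ (2 ∣ n) ∧ q = (m : ℚ) / (n : ℚ)) :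
    ∃ a : MonoidAlgebra Z2 (Multiplicative (ZMod 7)),
      ¬ ∃ (e : MonoidAlgebra Z2 (Multiplicative (ZMod 7)))
          (u : (MonoidAlgebra Z2 (Multiplicative (ZMod 7)))ˣ),
          IsIdempotentElem e ∧ a = e + (u : MonoidAlgebra Z2 (Multiplicative (ZMod 7))) := by
  refine ⟨aEl Z2, ?_⟩
  rintro ⟨e, u, he, hsum⟩
  have hu1 : IsUnit (psi1 Z2 hZ2 (u : MonoidAlgebra Z2 G7)) := u.isUnit.map (psi1 Z2 hZ2)
  have hu2 : IsUnit (psi2 Z2 hZ2 (u : MonoidAlgebra Z2 G7)) := u.isUnit.map (psi2 Z2 hZ2)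
  rcases idem_cases Z2 hZ2 e he with h | h | h | h <;> subst h
  · have hc := congrArg (psi1 Z2 hZ2) hsum
    rw [map_add, psi1_aEl Z2 hZ2, map_zero] at hc
    exact hu1.ne_zero (by linear_combination -hc)
  · have hc := congrArg (psi2 Z2 hZ2) hsum
    rw [map_add, psi2_aEl Z2 hZ2, map_one] at hc
    exact hu2.ne_zero (by linear_combination -hc)
  · have hc := congrArg (psi1 Z2 hZ2) hsum
    rw [map_add, psi1_aEl Z2 hZ2, psi1_eps Z2 hZ2] at hc
    exact hu1.ne_zero (by linear_combination -hc)
  · have hc := congrArg (psi2 Z2 hZ2) hsum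
    rw [map_add, psi2_aEl Z2 hZ2, map_sub, map_one, psi2_eps Z2 hZ2] at hc
    exact hu2.ne_zero (by linear_combination -hc)
end
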